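/- Let X be a finite alphabet, let X₁,...,Xₙ be i.i.d. with distribution p_X on X, and let Φ : X^n → {0,1}* be an injective binary encoding. Then the expected codeword length satisfies E[|Φ(X^n)|] ≥ n·H(X) − log₂ n − log₂(e·log₂|X|), provided E[|Φ(X^n)|] < n·log₂|X| (and the bound holds trivially otherwise since n·log₂|X| ≥ n·H(X)). -/

import Mathlib

/-! For `0 < θ < 1` the weights `(1 - θ) (θ/2)^|w|` have total mass at most `1` on any set of
binary words, because there are at most `2^ℓ` words of length `ℓ`. Gibbs' inequality against these
weights, pulled back along the injective code `Φ`, gives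
`H(Xⁿ) ≤ -log₂ (1 - θ) + (1 - log₂ θ) E|Φ|`, and `θ = m / (m + 1)` with `m = n log₂ |𝒳| - 1`
turns this into `H(Xⁿ) ≤ E|Φ| + log₂ (e n log₂ |𝒳|)` whenever `E|Φ| ≤ m`; otherwise the bound
follows from `H(Xⁿ) ≤ n log₂ |𝒳|`. Finally `H(Xⁿ) = n H(X)`. -/

open Real Finset

noncomputable def entropy {ι : Type*} [Fintype ι] (p : ι → ℝ) : ℝ :=
  -∑ i, p i * logb 2 (p i)

section Entropy

variable {ι κ α : Type*} [Fintype ι] [Fintype κ] [Fintype α]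

lemma entropy_eq_sum_negMulLog_div (p : ι → ℝ) : entropy p = (∑ i, negMulLog (p i)) / log 2 := by
  simp only [entropy, negMulLog, logb, sum_div, ← sum_neg_distrib]
  congr 1 with i
  ring

lemma entropy_comp_equiv (p : ι → ℝ) (e : κ ≃ ι) : entropy (p ∘ e) = entropy p := by
  simp only [entropy, Function.comp_apply, e.sum_comp (fun i => p i * logb 2 (p i))]

lemma entropy_mul_of_sum_eq_one {p : ι → ℝ} {q : κ → ℝ} (hp : ∑ i, p i = 1)
    (hq : ∑ k, q k = 1) : entropy (fun z : ι × κ => p z.1 * q z.2) = entropy p + entropy q := by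
  simp only [entropy_eq_sum_negMulLog_div, negMulLog_mul, Fintype.sum_prod_type, sum_add_distrib,
    ← mul_sum, ← sum_mul, hp, hq, one_mul, add_div]

lemma sum_prod_apply_eq_one {p : α → ℝ} (hp : ∑ a, p a = 1) (n : ℕ) :
    ∑ x : Fin n → α, ∏ i, p (x i) = 1 := by
  rw [← Fintype.prod_sum (fun _ => p), hp, prod_const_one]

lemma entropy_pi_of_sum_eq_one {p : α → ℝ} (hp : ∑ a, p a = 1) (n : ℕ) :
    entropy (fun x : Fin n → α => ∏ i, p (x i)) = n * entropy p := by
  induction n with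
  | zero => simp [entropy]
  | succ n ih =>
    have hcons : (fun x : Fin (n + 1) → α => ∏ i, p (x i)) ∘ Fin.consEquiv (fun _ => α) =
        fun z => p z.1 * ∏ i, p (z.2 i) := by
      ext z
      simp [Fin.consEquiv, Fin.prod_univ_succ]
    rw [← entropy_comp_equiv _ (Fin.consEquiv _), hcons,
      entropy_mul_of_sum_eq_one hp (sum_prod_apply_eq_one hp n), ih]
    push_cast
    ring

lemma entropy_le_neg_sum_mul_logb {q r : ι → ℝ} (hq : ∀ i, 0 ≤ q i) (hq1 : ∑ i, q i = 1)
    (hr : ∀ i, 0 < r i) (hr1 : ∑ i, r i ≤ 1) :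
    entropy q ≤ -∑ i, q i * logb 2 (r i) := by
  have key : ∀ i, q i * log (r i) ≤ q i * log (q i) + (r i - q i) := by
    intro i
    rcases (hq i).eq_or_lt with h | h
    · simp [← h, (hr i).le]
    · have := log_le_sub_one_of_pos (div_pos (hr i) h)
      rw [log_div (hr i).ne' h.ne'] at this
      have := mul_le_mul_of_nonneg_left this h.le
      rw [mul_sub, mul_sub, mul_div_cancel₀ _ h.ne'] at this
      linarith
  have hsum : ∑ i, q i * log (r i) ≤ ∑ i, q i * log (q i) := by
    have := sum_le_sum fun i (_ : i ∈ univ) => key i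
    rw [sum_add_distrib, sum_sub_distrib, hq1] at this
    linarith
  simp only [entropy, logb, ← mul_div_assoc, ← sum_div]
  exact neg_le_neg (div_le_div_of_nonneg_right hsum (log_nonneg one_le_two))

lemma entropy_le_logb_card {q : ι → ℝ} (hq : ∀ i, 0 ≤ q i) (hq1 : ∑ i, q i = 1) :
    entropy q ≤ logb 2 (Fintype.card ι) := by
  have hcard : (0 : ℝ) < Fintype.card ι := by
    have : Nonempty ι := by
      by_contra h
      simp [not_nonempty_iff.mp h] at hq1
    exact_mod_cast Fintype.card_pos
  refine (entropy_le_neg_sum_mul_logb hq hq1 (fun _ => inv_pos.mpr hcard) ?_).trans_eq ?_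
  · simp [hcard.ne']
  · simp [logb_inv, ← sum_mul, hq1]

end Entropy

section Coding

lemma sum_pow_length_le {α : Type*} [Fintype α] [Nonempty α] (T : Finset (List α)) {θ : ℝ}
    (h0 : 0 ≤ θ) (h1 : θ < 1) :
    ∑ w ∈ T, (θ / Fintype.card α) ^ w.length ≤ (1 - θ)⁻¹ := by
  classical
  rw [sum_comp (fun ℓ => (θ / Fintype.card α) ^ ℓ) List.length]
  calc ∑ ℓ ∈ T.image List.length, #{w ∈ T | w.length = ℓ} • (θ / Fintype.card α) ^ ℓ
      ≤ ∑ ℓ ∈ T.image List.length, θ ^ ℓ := by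
        refine sum_le_sum fun ℓ _ => ?_
        rw [nsmul_eq_mul, div_pow, mul_div_assoc', div_le_iff₀ (by positivity), mul_comm]
        gcongr
        exact_mod_cast card_filter_length_eq_le
    _ ≤ ∑' ℓ, θ ^ ℓ :=
        (summable_geometric_of_lt_one h0 h1).sum_le_tsum _ fun ℓ _ => pow_nonneg h0 ℓ
    _ = (1 - θ)⁻¹ := tsum_geometric_of_lt_one h0 h1

variable {S : Type*} [Fintype S]

lemma entropy_le_of_injective_code {q : S → ℝ} (hq : ∀ x, 0 ≤ q x) (hq1 : ∑ x, q x = 1)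
    {Φ : S → List Bool} (hΦ : Function.Injective Φ) {θ : ℝ} (h0 : 0 < θ) (h1 : θ < 1) :
    entropy q ≤ -logb 2 (1 - θ) + (1 - logb 2 θ) * ∑ x, q x * ((Φ x).length : ℝ) := by
  classical
  have hr1 : ∑ x, (1 - θ) * (θ / 2) ^ (Φ x).length ≤ 1 := by
    have := sum_pow_length_le (univ.image Φ) h0.le h1
    rw [sum_image fun x _ y _ h => hΦ h, Fintype.card_bool, Nat.cast_ofNat] at this
    rw [← mul_sum]
    calc _ ≤ (1 - θ) * (1 - θ)⁻¹ := by gcongr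
      _ = 1 := mul_inv_cancel₀ (by linarith)
  refine (entropy_le_neg_sum_mul_logb hq hq1 (fun x => by have := sub_pos.2 h1; positivity)
    hr1).trans_eq ?_
  have hlogb : ∀ x, logb 2 ((1 - θ) * (θ / 2) ^ (Φ x).length)
      = logb 2 (1 - θ) + ((Φ x).length : ℝ) * (logb 2 θ - 1) := by
    intro x
    rw [logb_mul (by linarith) (by positivity), logb_pow, logb_div h0.ne' two_ne_zero,
      logb_self_eq_one one_lt_two]
  have hterm : ∀ x, q x * (((Φ x).length : ℝ) * (logb 2 θ - 1))
      = (logb 2 θ - 1) * (q x * (Φ x).length) := fun x => by ring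
  simp only [hlogb, mul_add, sum_add_distrib, ← sum_mul, hq1, hterm, ← mul_sum]
  ring

lemma mul_logb_one_add_inv_le {m : ℝ} (hm : 0 < m) : m * logb 2 (1 + m⁻¹) ≤ logb 2 (exp 1) := by
  rw [logb, logb, log_exp, mul_div_assoc', div_le_div_iff_of_pos_right (log_pos one_lt_two)]
  calc m * log (1 + m⁻¹) ≤ m * m⁻¹ := by
        gcongr
        linarith [log_le_sub_one_of_pos (show 0 < 1 + m⁻¹ by positivity)]
    _ = 1 := mul_inv_cancel₀ hm.ne'

lemma entropy_le_expected_length_add_logb {q : S → ℝ} (hq : ∀ x, 0 ≤ q x)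
    (hq1 : ∑ x, q x = 1) {Φ : S → List Bool} (hΦ : Function.Injective Φ) {m : ℝ} (hm : 0 < m)
    (hμ : ∑ x, q x * ((Φ x).length : ℝ) ≤ m) :
    entropy q ≤ ∑ x, q x * ((Φ x).length : ℝ) + logb 2 (exp 1 * (m + 1)) := by
  have hθ : m / (m + 1) < 1 := (div_lt_one (by linarith)).2 (by linarith)
  have h := entropy_le_of_injective_code hq hq1 hΦ (by positivity) hθ
  have hθ_inv : (m / (m + 1))⁻¹ = 1 + m⁻¹ := by field_simp
  have h1θ : 1 - m / (m + 1) = (m + 1)⁻¹ := by field_simp; ring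
  rw [h1θ, logb_inv, neg_neg, ← neg_neg (logb 2 (m / (m + 1))), ← logb_inv, hθ_inv] at h
  have hpos : 0 ≤ logb 2 (1 + m⁻¹) :=
    logb_nonneg one_lt_two (by linarith [inv_pos.2 hm])
  have := mul_logb_one_add_inv_le hm
  rw [logb_mul (exp_pos 1).ne' (by linarith)]
  linarith [mul_le_mul_of_nonneg_right hμ hpos]

lemma entropy_le_expected_length_add_logb_of_le {q : S → ℝ} (hq : ∀ x, 0 ≤ q x)
    (hq1 : ∑ x, q x = 1) {Φ : S → List Bool} (hΦ : Function.Injective Φ) {M : ℝ} (hM : 1 ≤ M)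
    (hHM : entropy q ≤ M) :
    entropy q ≤ ∑ x, q x * ((Φ x).length : ℝ) + logb 2 (exp 1 * M) := by
  rcases lt_or_ge (∑ x, q x * ((Φ x).length : ℝ)) (M - 1) with hμ | hμ
  · have hμ0 : 0 ≤ ∑ x, q x * ((Φ x).length : ℝ) :=
      sum_nonneg fun x _ => mul_nonneg (hq x) (Nat.cast_nonneg _)
    simpa using entropy_le_expected_length_add_logb hq hq1 hΦ (by linarith) hμ.le
  · have : 1 ≤ logb 2 (exp 1 * M) := by
      rw [le_logb_iff_rpow_le one_lt_two (by positivity), rpow_one]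
      nlinarith [add_one_le_exp 1]
    linarith

end Coding

theorem stmt_9 {𝒳 : Type*} [Fintype 𝒳] (n : ℕ)
    (pX : 𝒳 → ℝ) (hp : ∀ a, 0 ≤ pX a) (h1 : ∑ a, pX a = 1)
    (Φ : (Fin n → 𝒳) → List Bool) (hΦ : Function.Injective Φ)
    (hE : ∑ x, (∏ i, pX (x i)) * ((Φ x).length : ℝ)
            < n * Real.logb 2 (Fintype.card 𝒳)) :
    ∑ x, (∏ i, pX (x i)) * ((Φ x).length : ℝ) ≥
      n * (-∑ a, pX a * Real.logb 2 (pX a)) - Real.logb 2 n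
        - Real.logb 2 (Real.exp 1 * Real.logb 2 (Fintype.card 𝒳)) := by
  have hq : ∀ x : Fin n → 𝒳, 0 ≤ ∏ i, pX (x i) := fun x => prod_nonneg fun i _ => hp (x i)
  have hq1 := sum_prod_apply_eq_one h1 n
  have hμ0 : 0 ≤ ∑ x, (∏ i, pX (x i)) * ((Φ x).length : ℝ) :=
    sum_nonneg fun x _ => mul_nonneg (hq x) (Nat.cast_nonneg _)
  have hpos := hμ0.trans_lt hE
  have hn : 1 ≤ (n : ℝ) := by
    exact_mod_cast Nat.one_le_iff_ne_zero.2 fun h => by simp [h] at hpos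
  have hK : 1 ≤ logb 2 (Fintype.card 𝒳) := by
    have hlogK : 0 < logb 2 (Fintype.card 𝒳) := pos_of_mul_pos_right hpos n.cast_nonneg
    have hK0 : (0 : ℝ) < Fintype.card 𝒳 :=
      (Nat.cast_nonneg _).lt_of_ne fun h => by simp [← h] at hlogK
    have hK1 : 2 ≤ Fintype.card 𝒳 := Nat.one_lt_cast.1 ((logb_pos_iff one_lt_two hK0).1 hlogK)
    rw [le_logb_iff_rpow_le one_lt_two hK0, rpow_one]
    exact_mod_cast hK1
  have hHM : entropy (fun x : Fin n → 𝒳 => ∏ i, pX (x i)) ≤ n * logb 2 (Fintype.card 𝒳) := by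
    simpa [Fintype.card_fun, logb_pow] using entropy_le_logb_card hq hq1
  have h := entropy_le_expected_length_add_logb_of_le hq hq1 hΦ
    (one_le_mul_of_one_le_of_one_le hn hK) hHM
  rw [entropy_pi_of_sum_eq_one h1 n, entropy, mul_left_comm,
    logb_mul (by positivity) (by positivity)] at h
  linarith
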